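/- Let a,b,c > 0 with b^4 < 1, and define f(x) = (c^4 + 3a^2b^2 x + 3a^4b^4 x^2 + a^6b^6c^4 x^3) / (b^6c^4 + 3a^2b^4 x + 3a^4b^2 x^2 + a^6c^4 x^3). Then f has exactly one fixed point in (0,∞). -/

import Mathlib

/-!
Writing `f = N / D`, clearing denominators gives
`N x * D y - N y * D x = (1 - b^4) * (y - x) * R x y` with `R ≥ 0` on `[0, ∞)²`,
so `f` is antitone on `[0, ∞)` when `b^4 ≤ 1`. A continuous map that is antitone on `[0, ∞)`
with `f 0 > 0` has a fixed point in `(0, f 0]` by the intermediate value theorem, and two fixed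
points `x ≤ y` of an antitone map satisfy `y = f y ≤ f x = x`.
-/

open Set

theorem existsUnique_pos_fixedPoint_of_antitoneOn {f : ℝ → ℝ} (hcont : ContinuousOn f (Ici 0))
    (hanti : AntitoneOn f (Ici 0)) (h0 : 0 < f 0) : ∃! x, 0 < x ∧ f x = x := by
  obtain ⟨x, ⟨hx0, -⟩, hfx⟩ : ∃ x ∈ Icc 0 (f 0), x - f x = 0 := by
    have hff0 : f (f 0) ≤ f 0 := hanti self_mem_Ici h0.le h0.le
    refine intermediate_value_Icc h0.le
      ((continuousOn_id.sub hcont).mono Icc_subset_Ici_self) ⟨?_, ?_⟩ <;>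
      simp only [Pi.sub_apply, id_eq] <;> linarith
  have hfix : f x = x := by linarith
  refine ⟨x, ⟨hx0.lt_of_ne ?_, hfix⟩, fun y ⟨hy, hfy⟩ => ?_⟩
  · rintro rfl
    exact h0.ne' hfix
  · rcases le_total x y with hxy | hyx
    · exact le_antisymm (hfy ▸ hfix ▸ hanti hx0 hy.le hxy) hxy
    · exact le_antisymm hyx (hfix ▸ hfy ▸ hanti hy.le hx0 hyx)

namespace GibbsRecursion

variable (a b c : ℝ)

def num (x : ℝ) : ℝ := c^4 + 3*a^2*b^2*x + 3*a^4*b^4*x^2 + a^6*b^6*c^4*x^3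

def den (x : ℝ) : ℝ := b^6*c^4 + 3*a^2*b^4*x + 3*a^4*b^2*x^2 + a^6*c^4*x^3

theorem num_mul_den_sub_num_mul_den (x y : ℝ) :
    num a b c x * den a b c y - num a b c y * den a b c x =
      (1 - b^4) * (y - x) *
        (3*a^2*b^4*c^4 + 3*a^4*b^2*c^4*(1 + b^4)*(x + y) + a^6*c^8*(1 + b^4 + b^8)*(x^2 + x*y + y^2)
          + 9*a^6*b^4*(x*y) + 3*a^8*b^2*c^4*(1 + b^4)*(x^2*y + x*y^2)
          + 3*a^10*b^4*c^4*(x^2*y^2)) := by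
  unfold num den
  ring

variable {a b c}

theorem num_zero_pos (hc : c ≠ 0) : 0 < num a b c 0 := by
  simp only [num]
  positivity

theorem den_pos (hb : b ≠ 0) (hc : c ≠ 0) {x : ℝ} (hx : 0 ≤ x) : 0 < den a b c x := by
  unfold den
  positivity

theorem continuousOn_num_div_den (hb : b ≠ 0) (hc : c ≠ 0) :
    ContinuousOn (fun x => num a b c x / den a b c x) (Ici 0) :=
  ContinuousOn.div (by unfold num; fun_prop) (by unfold den; fun_prop)
    fun _ hx => (den_pos hb hc hx).ne'

theorem antitoneOn_num_div_den (hb : b ≠ 0) (hc : c ≠ 0) (hb4 : b^4 ≤ 1) :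
    AntitoneOn (fun x => num a b c x / den a b c x) (Ici 0) := by
  intro x (hx : 0 ≤ x) y (hy : 0 ≤ y) hxy
  rw [div_le_div_iff₀ (den_pos hb hc hy) (den_pos hb hc hx)]
  have hcross := num_mul_den_sub_num_mul_den a b c x y
  have hsign : 0 ≤ (1 - b^4) * (y - x) := mul_nonneg (sub_nonneg.2 hb4) (sub_nonneg.2 hxy)
  nlinarith [mul_nonneg hsign (by positivity :
    0 ≤ 3*a^2*b^4*c^4 + 3*a^4*b^2*c^4*(1 + b^4)*(x + y)
      + a^6*c^8*(1 + b^4 + b^8)*(x^2 + x*y + y^2) + 9*a^6*b^4*(x*y)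
      + 3*a^8*b^2*c^4*(1 + b^4)*(x^2*y + x*y^2) + 3*a^10*b^4*c^4*(x^2*y^2))]

end GibbsRecursion

theorem f_unique_positive_fixed_point (a b c : ℝ) (hb : 0 < b) (hc : 0 < c)
    (hb4 : b^4 < 1) :
    ∃! x : ℝ, 0 < x ∧
      (c^4 + 3*a^2*b^2*x + 3*a^4*b^4*x^2 + a^6*b^6*c^4*x^3) /
        (b^6*c^4 + 3*a^2*b^4*x + 3*a^4*b^2*x^2 + a^6*c^4*x^3) = x :=
  existsUnique_pos_fixedPoint_of_antitoneOn (GibbsRecursion.continuousOn_num_div_den hb.ne' hc.ne')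
    (GibbsRecursion.antitoneOn_num_div_den hb.ne' hc.ne' hb4.le)
    (div_pos (GibbsRecursion.num_zero_pos hc.ne') (GibbsRecursion.den_pos hb.ne' hc.ne' le_rfl))
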